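/- A finite Borel measure μ on Cantor space is Martin-Löf absolutely continuous if and only if μ assigns measure zero to the set of points of Cantor space that are not Martin-Löf random. -/

import Mathlib

/-!
The non-random points are the union, over the countably many Martin-Löf tests `f`, of the sets
`⋂ m, G_m(f)`. Hence `μ` annihilates them iff `μ (⋂ m, G_m(f)) = 0` for every test, which is
bounded by `⨅ m, μ (G_m(f))`. Conversely, every test `f` is dominated by the nested test
`G'_n = ⋃ k, G_{n+1+k}(f)` (again a test, as `∑ k, 2^-(n+1+k) = 2^-n`), and for a nested test
continuity from above of the finite measure `μ` gives `⨅ n, μ (G'_n) = μ (⋂ n, G'_n) = 0`.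
-/

open MeasureTheory
open scoped ENNReal

/-- The basic clopen cylinder `[σ]` of a finite binary string `σ`:
all `Z : ℕ → Bool` extending `σ`. -/
def cyl (σ : List Bool) : Set (ℕ → Bool) :=
  {Z | ∀ i : Fin σ.length, Z i = σ.get i}

/-- The `m`-th open set `G_m` determined by a test `f`: the union of the
cylinders `[σ]` over the strings `σ` enumerated by `f m`. -/
def testSet (f : ℕ → ℕ → Option (List Bool)) (m : ℕ) : Set (ℕ → Bool) :=
  ⋃ σ ∈ {σ : List Bool | ∃ i, f m i = some σ}, cyl σ

/-- `lam` is the fair-coin product probability measure on Cantor space: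
the (unique) Borel probability measure giving each cylinder `[σ]` measure
`2 ^ (-|σ|)`. -/
def IsFairCoin (lam : Measure (ℕ → Bool)) : Prop :=
  IsProbabilityMeasure lam ∧ ∀ σ : List Bool, lam (cyl σ) = 2⁻¹ ^ σ.length

/-- A Martin-Löf test with respect to the fair-coin measure `lam`: a
computable `f : ℕ → ℕ → Option (List Bool)` whose associated open sets
`G_m` satisfy `lam (G_m) ≤ 2 ^ (-m)`. -/
def IsMLTest (lam : Measure (ℕ → Bool)) (f : ℕ → ℕ → Option (List Bool)) : Prop :=
  Computable₂ f ∧ ∀ m : ℕ, lam (testSet f m) ≤ 2⁻¹ ^ m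

/-- `Z` is Martin-Löf random: it passes every Martin-Löf test. -/
def MLRandom (lam : Measure (ℕ → Bool)) (Z : ℕ → Bool) : Prop :=
  ∀ f, IsMLTest lam f → ∃ m, Z ∉ testSet f m

/-- A measure `μ` is Martin-Löf absolutely continuous:
`inf_m μ (G_m) = 0` for every Martin-Löf test. -/
def MLAC (lam μ : Measure (ℕ → Bool)) : Prop :=
  ∀ f, IsMLTest lam f → ⨅ m, μ (testSet f m) = 0

theorem Set.countable_setOf_computable {α σ : Type*} [Primcodable α] [Primcodable σ] :
    {f : α → σ | Computable f}.Countable := by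
  let code : {f : α → σ // Computable f} → {g : ℕ → ℕ // Computable g} := fun f =>
    ⟨fun n => Encodable.encode ((Encodable.decode n).map f.1),
      Computable.encode.comp (Computable.decode.option_map (f.2.comp Computable.snd).to₂)⟩
  have hcode : Function.Injective code := fun f g hfg => Subtype.ext <| funext fun a => by
    have := congrFun (congrArg Subtype.val hfg) (Encodable.encode a)
    simpa [code] using this
  exact Set.countable_coe_iff.mp hcode.countable

theorem Set.countable_setOf_computable₂ {α β σ : Type*} [Primcodable α] [Primcodable β]
    [Primcodable σ] : {f : α → β → σ | Computable₂ f}.Countable :=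
  Set.countable_setOf_computable.preimage Function.uncurry_injective

theorem ENNReal.tsum_inv_two_pow_add_succ (n : ℕ) :
    ∑' k : ℕ, (2⁻¹ : ℝ≥0∞) ^ (n + 1 + k) = 2⁻¹ ^ n := by
  simp_rw [pow_add, ENNReal.tsum_mul_left, ENNReal.tsum_geometric_two, pow_one, mul_assoc,
    ENNReal.inv_mul_cancel two_ne_zero ENNReal.ofNat_ne_top, mul_one]

theorem measurableSet_cyl (σ : List Bool) : MeasurableSet (cyl σ) := by
  have h : cyl σ = ⋂ i : Fin σ.length, (fun Z : ℕ → Bool => Z i) ⁻¹' {σ.get i} := by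
    ext Z; simp [cyl]
  rw [h]
  exact .iInter fun i => measurable_pi_apply (i : ℕ) (.singleton _)

theorem measurableSet_testSet (f : ℕ → ℕ → Option (List Bool)) (m : ℕ) :
    MeasurableSet (testSet f m) :=
  .biUnion (Set.to_countable _) fun σ _ => measurableSet_cyl σ

theorem mem_testSet {f : ℕ → ℕ → Option (List Bool)} {m : ℕ} {Z : ℕ → Bool} :
    Z ∈ testSet f m ↔ ∃ σ, (∃ i, f m i = some σ) ∧ Z ∈ cyl σ := by
  simp [testSet]

def tailTest (f : ℕ → ℕ → Option (List Bool)) (n i : ℕ) : Option (List Bool) :=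
  f (n + 1 + i.unpair.1) i.unpair.2

theorem testSet_tailTest (f : ℕ → ℕ → Option (List Bool)) (n : ℕ) :
    testSet (tailTest f) n = ⋃ k, testSet f (n + 1 + k) := by
  ext Z
  simp only [Set.mem_iUnion, mem_testSet, tailTest]
  constructor
  · rintro ⟨σ, ⟨i, hi⟩, hZ⟩
    exact ⟨i.unpair.1, σ, ⟨i.unpair.2, hi⟩, hZ⟩
  · rintro ⟨k, σ, ⟨i, hi⟩, hZ⟩
    exact ⟨σ, ⟨Nat.pair k i, by simpa using hi⟩, hZ⟩

theorem antitone_testSet_tailTest (f : ℕ → ℕ → Option (List Bool)) :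
    Antitone (testSet (tailTest f)) := by
  refine antitone_nat_of_succ_le fun n => ?_
  simp only [testSet_tailTest]
  exact Set.iUnion_subset fun k =>
    Set.subset_iUnion_of_subset (k + 1) (congrArg (testSet f) (by omega)).subset

theorem testSet_succ_subset_testSet_tailTest (f : ℕ → ℕ → Option (List Bool)) (n : ℕ) :
    testSet f (n + 1) ⊆ testSet (tailTest f) n := by
  rw [testSet_tailTest]
  exact Set.subset_iUnion (fun k => testSet f (n + 1 + k)) 0

theorem Computable₂.tailTest {f : ℕ → ℕ → Option (List Bool)} (hf : Computable₂ f) :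
    Computable₂ (tailTest f) := by
  have hlevel : Primrec fun p : ℕ × ℕ => p.1 + 1 + p.2.unpair.1 :=
    Primrec.nat_add.comp (Primrec.nat_add.comp .fst (.const 1))
      (Primrec.fst.comp (Primrec.unpair.comp .snd))
  have hindex : Primrec fun p : ℕ × ℕ => p.2.unpair.2 :=
    Primrec.snd.comp (Primrec.unpair.comp .snd)
  exact hf.comp hlevel.to_comp hindex.to_comp

theorem IsMLTest.tailTest {lam : Measure (ℕ → Bool)} {f : ℕ → ℕ → Option (List Bool)}
    (hf : IsMLTest lam f) : IsMLTest lam (_root_.tailTest f) := by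
  refine ⟨hf.1.tailTest, fun n => ?_⟩
  calc lam (testSet (_root_.tailTest f) n) = lam (⋃ k, testSet f (n + 1 + k)) := by
        rw [testSet_tailTest]
    _ ≤ ∑' k, lam (testSet f (n + 1 + k)) := measure_iUnion_le _
    _ ≤ ∑' k, (2⁻¹ : ℝ≥0∞) ^ (n + 1 + k) := ENNReal.tsum_le_tsum fun k => hf.2 _
    _ = 2⁻¹ ^ n := ENNReal.tsum_inv_two_pow_add_succ n

theorem setOf_not_MLRandom_eq_biUnion_iInter (lam : Measure (ℕ → Bool)) :
    {Z | ¬ MLRandom lam Z} = ⋃ f ∈ {f | IsMLTest lam f}, ⋂ m, testSet f m := by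
  ext Z
  simp [MLRandom]

theorem countable_setOf_isMLTest (lam : Measure (ℕ → Bool)) :
    {f | IsMLTest lam f}.Countable :=
  Set.countable_setOf_computable₂.mono fun _ hf => hf.1

theorem MLAC.measure_setOf_not_MLRandom {lam μ : Measure (ℕ → Bool)} (h : MLAC lam μ) :
    μ {Z | ¬ MLRandom lam Z} = 0 := by
  rw [setOf_not_MLRandom_eq_biUnion_iInter,
    measure_biUnion_null_iff (countable_setOf_isMLTest lam)]
  intro f hf
  refine le_antisymm ?_ zero_le
  rw [← h f hf]
  exact le_iInf fun m => measure_mono (Set.iInter_subset _ m)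

theorem MLAC.of_measure_setOf_not_MLRandom {lam μ : Measure (ℕ → Bool)} [IsFiniteMeasure μ]
    (h : μ {Z | ¬ MLRandom lam Z} = 0) : MLAC lam μ := by
  intro f hf
  have hnull : μ (⋂ n, testSet (tailTest f) n) = 0 := by
    refine measure_mono_null ?_ h
    rw [setOf_not_MLRandom_eq_biUnion_iInter]
    exact Set.subset_biUnion_of_mem (u := fun g => ⋂ m, testSet g m) hf.tailTest
  refine le_antisymm ?_ zero_le
  calc ⨅ m, μ (testSet f m)
      ≤ ⨅ n, μ (testSet (tailTest f) n) := le_iInf fun n =>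
        iInf_le_of_le (n + 1) (measure_mono (testSet_succ_subset_testSet_tailTest f n))
    _ = μ (⋂ n, testSet (tailTest f) n) := ((antitone_testSet_tailTest f).measure_iInter
        (fun n => (measurableSet_testSet _ n).nullMeasurableSet) ⟨0, measure_ne_top μ _⟩).symm
    _ = 0 := hnull

theorem stmt14_general (lam : Measure (ℕ → Bool))
    (μ : Measure (ℕ → Bool)) [IsFiniteMeasure μ] :
    MLAC lam μ ↔ μ {Z : ℕ → Bool | ¬ MLRandom lam Z} = 0 :=
  ⟨MLAC.measure_setOf_not_MLRandom, MLAC.of_measure_setOf_not_MLRandom⟩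

/-- A finite Borel measure `μ` on Cantor space is Martin-Löf
absolutely continuous iff `μ` gives measure zero to the set of non-Martin-Löf
random points. -/
theorem stmt14 (lam : Measure (ℕ → Bool)) (hlam : IsFairCoin lam)
    (μ : Measure (ℕ → Bool)) [IsFiniteMeasure μ] :
    MLAC lam μ ↔ μ {Z : ℕ → Bool | ¬ MLRandom lam Z} = 0 :=
  stmt14_general lam μ
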